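/- arXiv:math/0302138 — 4 statements merged into one kernel-verified Lean document; each statement's English description precedes it below -/
import Mathlib

section
/- Let r ≥ 1, let l₁, …, l_r be pairwise distinct primes with each l_i ≥ 5, and let e₁, …, e_r ≥ 1 be integers. Set G := G_{l₁,e₁} × ⋯ × G_{l_r,e_r}. Let n ≥ 2 be an integer and let H be a subgroup of Gⁿ such that for every pair of distinct indices s, t ∈ {1, …, n} the projection Gⁿ → G² onto the s-th and t-th coordinates maps H surjectively onto G². Then H = Gⁿ. -/
open Matrix

/-- The subgroup `{±1}` of `SL₂(ℤ/Nℤ)`, i.e. the subgroup generated by `-1`. -/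
def pmOne (N : ℕ) : Subgroup (SpecialLinearGroup (Fin 2) (ZMod N)) :=
  Subgroup.zpowers (-1)

instance pmOne_normal (N : ℕ) : (pmOne N).Normal := by
  constructor
  intro x hx g
  obtain ⟨k, rfl⟩ := hx
  refine ⟨k, ?_⟩
  have hc : Commute ((-1 : SpecialLinearGroup (Fin 2) (ZMod N)) ^ k) g := by
    apply Commute.zpow_left
    show (-1) * g = g * (-1)
    rw [neg_one_mul, mul_neg_one]
  rw [← hc.eq, mul_assoc, mul_inv_cancel, mul_one]

/-- `G_{l,e} = SL₂(ℤ/l^eℤ)/{±I}`, the quotient of `SL₂(ℤ/l^eℤ)` by its central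
subgroup `{I, -I}`. -/
def Gle (l e : ℕ) : Type :=
  SpecialLinearGroup (Fin 2) (ZMod (l ^ e)) ⧸ pmOne (l ^ e)

instance (l e : ℕ) : Group (Gle l e) :=
  inferInstanceAs (Group (SpecialLinearGroup (Fin 2) (ZMod (l ^ e)) ⧸ pmOne (l ^ e)))

/-!
A subgroup `H ≤ Gⁿ` of a power of a perfect group that surjects onto every pair of coordinates
contains every element of `G` placed at any coordinate `t`. Indeed, grow the set `S` of
coordinates on which the element is `1`: the commutator of an element of `H` that is `1` on `S`
with one that is `1` at a new coordinate `s` is `1` on `S ∪ {s}`, and the values at `t` of such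
commutators exhaust the perfect group `G`.

It remains to see that `G = ∏ SL₂(ℤ/lᵉ)/{±1}` is perfect. Since `ℤ/lᵉ` is local, every element
of `SL₂(ℤ/lᵉ)` is a product of elementary transvections, and since `2` and `3` are units, each
of these is a commutator: `⁅diag(2, 1/2), τ₀₁(x/3)⁆ = τ₀₁(x)`, and likewise for `τ₁₀`.
-/

open scoped MatrixGroups commutatorElement

namespace Group.IsPerfect

instance instPi {η : Type*} [Finite η] {G : η → Type*} [∀ i, Group (G i)]
    [∀ i, IsPerfect (G i)] : IsPerfect (∀ i, G i) :=
  ⟨by simp_rw [commutator_def, ← Subgroup.pi_top Set.univ, Subgroup.commutator_pi_pi_of_finite,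
    ← commutator_def, commutator_eq_top]⟩

end Group.IsPerfect

namespace Subgroup

variable {ι : Type*} {G : ι → Type*} [∀ i, Group (G i)] {H : Subgroup (∀ i, G i)}

lemma exists_mem_eval_eq_of_map_prod_eval_eq_top {s t : ι}
    (hst : H.map ((Pi.evalMonoidHom G s).prod (Pi.evalMonoidHom G t)) = ⊤) (a : G s) (b : G t) :
    ∃ x ∈ H, x s = a ∧ x t = b := by
  obtain ⟨x, hx, hab⟩ := hst.ge (mem_top (a, b))
  exact ⟨x, hx, congrArg Prod.fst hab, congrArg Prod.snd hab⟩

lemma map_eval_inf_pi_insert_bot_eq_top [DecidableEq ι] {S : Finset ι} {s t : ι}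
    [Group.IsPerfect (G t)] (hS : (H ⊓ pi S fun _ ↦ ⊥).map (Pi.evalMonoidHom G t) = ⊤)
    (hst : H.map ((Pi.evalMonoidHom G s).prod (Pi.evalMonoidHom G t)) = ⊤) :
    (H ⊓ pi ↑(insert s S) fun _ ↦ ⊥).map (Pi.evalMonoidHom G t) = ⊤ := by
  rw [eq_top_iff, ← Group.IsPerfect.commutator_eq_top, _root_.commutator_def, commutator_le]
  rintro a - b -
  obtain ⟨x, ⟨hxH, hxS⟩, rfl⟩ := hS.ge (mem_top a)
  obtain ⟨y, hyH, hys, rfl⟩ := exists_mem_eval_eq_of_map_prod_eval_eq_top hst 1 b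
  have hxyH : ⁅x, y⁆ ∈ H := by
    rw [commutatorElement_def]
    exact mul_mem (mul_mem (mul_mem hxH hyH) (inv_mem hxH)) (inv_mem hyH)
  refine ⟨⁅x, y⁆, ⟨hxyH, (mem_pi _).mpr fun u hu ↦ ?_⟩, map_commutatorElement _ x y⟩
  rw [mem_bot, ← Pi.evalMonoidHom_apply G u ⁅x, y⁆, map_commutatorElement,
    Pi.evalMonoidHom_apply, Pi.evalMonoidHom_apply]
  obtain rfl | hu := Finset.mem_insert.mp hu
  · rw [hys, commutatorElement_one_right]
  · rw [mem_bot.mp ((mem_pi _).mp hxS u hu), commutatorElement_one_left]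

lemma map_eval_inf_pi_bot_eq_top [DecidableEq ι] [Nontrivial ι] {t : ι}
    [Group.IsPerfect (G t)]
    (hpair : ∀ i j, i ≠ j → H.map ((Pi.evalMonoidHom G i).prod (Pi.evalMonoidHom G j)) = ⊤)
    (S : Finset ι) (htS : t ∉ S) :
    (H ⊓ pi S fun _ ↦ ⊥).map (Pi.evalMonoidHom G t) = ⊤ := by
  induction S using Finset.induction_on with
  | empty =>
    obtain ⟨s, hst⟩ := exists_ne t
    rw [eq_top_iff]
    rintro g -
    obtain ⟨x, hx, -, rfl⟩ := exists_mem_eval_eq_of_map_prod_eval_eq_top (hpair s t hst) 1 g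
    exact ⟨x, ⟨hx, by simp [mem_pi]⟩, rfl⟩
  | insert s S _ ih =>
    rw [Finset.mem_insert, not_or] at htS
    exact map_eval_inf_pi_insert_bot_eq_top (ih htS.2) (hpair s t (Ne.symm htS.1))

theorem eq_top_of_map_prod_eval_eq_top [Fintype ι] [DecidableEq ι] [Nontrivial ι]
    [∀ i, Group.IsPerfect (G i)]
    (hpair : ∀ i j, i ≠ j → H.map ((Pi.evalMonoidHom G i).prod (Pi.evalMonoidHom G j)) = ⊤) :
    H = ⊤ := by
  rw [eq_top_iff, ← pi_top Set.univ, pi_le_iff]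
  rintro t _ ⟨g, -, rfl⟩
  obtain ⟨x, ⟨hxH, hx⟩, rfl⟩ :=
    (map_eval_inf_pi_bot_eq_top hpair _ (Finset.notMem_erase t Finset.univ)).ge (mem_top g)
  have hx_single : Pi.mulSingle t (x t) = x := by
    ext u
    obtain rfl | hu := eq_or_ne u t
    · exact Pi.mulSingle_eq_same u _
    · rw [Pi.mulSingle_eq_of_ne hu, mem_bot.mp ((mem_pi _).mp hx u (by simp [hu]))]
  simpa [hx_single] using hxH

end Subgroup

namespace Matrix.SpecialLinearGroup

variable {R : Type*} [CommRing R]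

local notation "τ₀₁" => transvection (zero_ne_one : (0 : Fin 2) ≠ 1)
local notation "τ₁₀" => transvection (one_ne_zero : (1 : Fin 2) ≠ 0)

@[simp]
lemma coe_transvection_zero_one (x : R) :
    (τ₀₁ x : Matrix (Fin 2) (Fin 2) R) = !![1, x; 0, 1] := by
  ext i j; fin_cases i <;> fin_cases j <;> simp [transvection_coe]

@[simp]
lemma coe_transvection_one_zero (x : R) :
    (τ₁₀ x : Matrix (Fin 2) (Fin 2) R) = !![1, 0; x, 1] := by
  ext i j; fin_cases i <;> fin_cases j <;> simp [transvection_coe]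

def diag2Unit (u : Rˣ) : SL(2, R) := ⟨!![(u : R), 0; 0, ↑u⁻¹], by simp⟩

@[simp]
lemma coe_diag2Unit (u : Rˣ) :
    (diag2Unit u : Matrix (Fin 2) (Fin 2) R) = !![(u : R), 0; 0, ↑u⁻¹] := rfl

lemma commutator_diag2Unit_transvection (u : Rˣ) (x : R) :
    ⁅diag2Unit u, τ₀₁ x⁆ = τ₀₁ ((u ^ 2 - 1) * x) := by
  ext i j
  fin_cases i <;> fin_cases j <;> simp [commutatorElement_def, coe_inv, adjugate_fin_two]
  ring

lemma commutator_diag2Unit_inv_transvection (u : Rˣ) (x : R) :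
    ⁅diag2Unit u⁻¹, τ₁₀ x⁆ = τ₁₀ ((u ^ 2 - 1) * x) := by
  ext i j
  fin_cases i <;> fin_cases j <;> simp [commutatorElement_def, coe_inv, adjugate_fin_two]
  ring

lemma diag2Unit_eq_transvection_prod (u : Rˣ) : diag2Unit u =
    τ₀₁ (u : R) * τ₁₀ (-((u⁻¹ : Rˣ) : R)) * τ₀₁ (u : R) * (τ₀₁ (-1) * τ₁₀ 1 * τ₀₁ (-1)) := by
  ext i j; fin_cases i <;> fin_cases j <;> simp [coe_mul]

lemma eq_transvection_mul_diag2Unit_mul_transvection (M : SL(2, R)) (u : Rˣ)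
    (hu : (u : R) = M 0 0) :
    M = τ₁₀ (M 1 0 * ((u⁻¹ : Rˣ) : R)) * diag2Unit u * τ₀₁ (((u⁻¹ : Rˣ) : R) * M 0 1) := by
  have hdet := M.det_coe
  rw [det_fin_two, ← hu] at hdet
  ext i j; fin_cases i <;> fin_cases j <;> simp [coe_mul, ← hu]
  linear_combination ((u⁻¹ : Rˣ) : R) * hdet - M 1 1 * u.mul_inv

lemma exists_isUnit_transvection_mul_zero_zero [IsLocalRing R] (M : SL(2, R)) :
    ∃ y : R, IsUnit ((τ₀₁ y * M : SL(2, R)) 0 0) := by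
  have hentry (y : R) : (τ₀₁ y * M : SL(2, R)) 0 0 = M 0 0 + y * M 1 0 := by
    simp [coe_mul, mul_apply, Fin.sum_univ_two]
  by_cases h00 : IsUnit (M 0 0)
  · exact ⟨0, by simpa [hentry] using h00⟩
  refine ⟨1, ?_⟩
  have hdet : M 0 0 * M 1 1 + -(M 0 1 * M 1 0) = 1 := by
    rw [← sub_eq_add_neg, ← det_fin_two, M.det_coe]
  have h10 : IsUnit (M 1 0) := by
    refine (IsLocalRing.isUnit_or_isUnit_of_isUnit_add (hdet ▸ isUnit_one)).elim
      (fun h ↦ absurd (isUnit_of_mul_isUnit_left h) h00)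
      (fun h ↦ isUnit_of_mul_isUnit_right (IsUnit.neg_iff _ |>.mp h))
  rw [hentry, one_mul]
  exact (IsLocalRing.isUnit_or_isUnit_of_isUnit_add (a := M 0 0 + M 1 0) (b := -M 0 0)
    (by simpa using h10)).resolve_right (by rwa [IsUnit.neg_iff])

theorem eq_top_of_transvection_mem [IsLocalRing R] {K : Subgroup SL(2, R)}
    (h01 : ∀ x, τ₀₁ x ∈ K) (h10 : ∀ x, τ₁₀ x ∈ K) : K = ⊤ := by
  have hdiag (u : Rˣ) : diag2Unit u ∈ K := by
    rw [diag2Unit_eq_transvection_prod]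
    exact mul_mem (mul_mem (mul_mem (h01 _) (h10 _)) (h01 _))
      (mul_mem (mul_mem (h01 _) (h10 _)) (h01 _))
  have hunit (M : SL(2, R)) (hM : IsUnit (M 0 0)) : M ∈ K := by
    obtain ⟨u, hu⟩ := hM
    rw [eq_transvection_mul_diag2Unit_mul_transvection M u hu]
    exact mul_mem (mul_mem (h10 _) (hdiag u)) (h01 _)
  refine (Subgroup.eq_top_iff' K).mpr fun M ↦ ?_
  obtain ⟨y, hy⟩ := exists_isUnit_transvection_mul_zero_zero M
  exact (K.mul_mem_cancel_left (h01 y)).mp (hunit _ hy)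

theorem isPerfect_of_isLocalRing [IsLocalRing R] (hR : ∃ u : Rˣ, IsUnit ((u : R) ^ 2 - 1)) :
    Group.IsPerfect SL(2, R) := by
  obtain ⟨u, v, hv⟩ := hR
  have hcomm (g h : SL(2, R)) : ⁅g, h⁆ ∈ commutator SL(2, R) :=
    Subgroup.commutator_mem_commutator (Subgroup.mem_top g) (Subgroup.mem_top h)
  refine ⟨eq_top_of_transvection_mem (fun x ↦ ?_) (fun x ↦ ?_)⟩
  · rw [← Units.mul_inv_cancel_left v x, hv, ← commutator_diag2Unit_transvection]
    exact hcomm _ _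
  · rw [← Units.mul_inv_cancel_left v x, hv, ← commutator_diag2Unit_inv_transvection]
    exact hcomm _ _

end Matrix.SpecialLinearGroup

namespace ZMod

theorem isLocalRing_prime_pow {p e : ℕ} (hp : p.Prime) (he : e ≠ 0) :
    IsLocalRing (ZMod (p ^ e)) :=
  haveI : Fact p.Prime := ⟨hp⟩
  haveI : Nontrivial (ZMod (p ^ e)) :=
    nontrivial_iff.mpr fun h ↦ hp.one_lt.ne' (Nat.pow_eq_one.mp h |>.resolve_right he)
  IsLocalRing.of_surjective' (PadicInt.toZModPow e) (ringHom_surjective _)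

theorem isUnit_prime_of_ne {q p : ℕ} (hq : q.Prime) (hp : p.Prime) (hqp : q ≠ p) (e : ℕ) :
    IsUnit (q : ZMod (p ^ e)) :=
  (isUnit_iff_coprime q (p ^ e)).mpr (((Nat.coprime_primes hq hp).mpr hqp).pow_right e)

end ZMod

theorem Gle.isPerfect {l e : ℕ} (hl : l.Prime) (h5 : 5 ≤ l) (he : 1 ≤ e) :
    Group.IsPerfect (Gle l e) := by
  have := ZMod.isLocalRing_prime_pow hl (by omega : e ≠ 0)
  have h2 := ZMod.isUnit_prime_of_ne Nat.prime_two hl (by omega) e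
  have h3 := ZMod.isUnit_prime_of_ne Nat.prime_three hl (by omega) e
  have := SpecialLinearGroup.isPerfect_of_isLocalRing ⟨h2.unit, by norm_num; exact h3⟩
  exact Group.IsPerfect.instQuotientSubgroup

theorem goursat_power_of_product_of_PSL2_general
    (r : ℕ) (l e : Fin r → ℕ)
    (hprime : ∀ i, (l i).Prime) (hfive : ∀ i, 5 ≤ l i)
    (he : ∀ i, 1 ≤ e i)
    (n : ℕ) (hn : 2 ≤ n)
    (H : Subgroup (∀ _ : Fin n, ∀ i : Fin r, Gle (l i) (e i)))
    (hsurj : ∀ s t : Fin n, s ≠ t →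
      Subgroup.map
        ((Pi.evalMonoidHom (fun _ : Fin n => ∀ i : Fin r, Gle (l i) (e i)) s).prod
          (Pi.evalMonoidHom (fun _ : Fin n => ∀ i : Fin r, Gle (l i) (e i)) t)) H = ⊤) :
    H = ⊤ := by
  have (i : Fin r) : Group.IsPerfect (Gle (l i) (e i)) :=
    Gle.isPerfect (hprime i) (hfive i) (he i)
  have : Nontrivial (Fin n) := Fin.nontrivial_iff_two_le.mpr hn
  exact Subgroup.eq_top_of_map_prod_eval_eq_top hsurj

/-- Let `r ≥ 1`, let `l₁, …, l_r` be pairwise distinct primes with each `l_i ≥ 5`, and let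
`e₁, …, e_r ≥ 1` be integers.  Set `G := G_{l₁,e₁} × ⋯ × G_{l_r,e_r}`.  Let `n ≥ 2` be an
integer and let `H` be a subgroup of `Gⁿ` such that for every pair of distinct indices
`s, t ∈ {1, …, n}` the projection `Gⁿ → G²` onto the `s`-th and `t`-th coordinates maps `H`
surjectively onto `G²`.  Then `H = Gⁿ`. -/
theorem goursat_power_of_product_of_PSL2
    (r : ℕ) (hr : 1 ≤ r) (l e : Fin r → ℕ)
    (hprime : ∀ i, (l i).Prime) (hfive : ∀ i, 5 ≤ l i)
    (hdistinct : ∀ i j, i ≠ j → l i ≠ l j) (he : ∀ i, 1 ≤ e i)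
    (n : ℕ) (hn : 2 ≤ n)
    (H : Subgroup (∀ _ : Fin n, ∀ i : Fin r, Gle (l i) (e i)))
    (hsurj : ∀ s t : Fin n, s ≠ t →
      Subgroup.map
        ((Pi.evalMonoidHom (fun _ : Fin n => ∀ i : Fin r, Gle (l i) (e i)) s).prod
          (Pi.evalMonoidHom (fun _ : Fin n => ∀ i : Fin r, Gle (l i) (e i)) t)) H = ⊤) :
    H = ⊤ :=
  goursat_power_of_product_of_PSL2_general r l e hprime hfive he n hn H hsurj
end

section
/- Let l be an odd prime and let e ≥ 2 be an integer. Let V_{l,e} denote the kernel of the reduction homomorphism SL₂(ℤ/l^eℤ) → SL₂(ℤ/l^{e−1}ℤ) induced by the ring homomorphism ℤ/l^eℤ → ℤ/l^{e−1}ℤ. Then V_{l,e} is abelian, and the only subgroups of SL₂(ℤ/l^eℤ) that are contained in V_{l,e} and are normal in SL₂(ℤ/l^eℤ) are the trivial subgroup and V_{l,e} itself. -/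
/-!
Put `ε = l ^ (e - 1)`, so that `ε² = 0` in `ℤ/l^eℤ`. The elements of `V_{l,e}` are exactly the
matrices `1 + ε X` with `X = [[a, b], [c, -a]]` traceless, and because `ε² = 0` they multiply by
adding the `X`'s; in particular `V_{l,e}` is abelian. A normal subgroup `W ≤ V_{l,e}` is stable
under conjugation by `T = [[1, 1], [0, 1]]` and `S = [[0, -1], [1, 0]]`. Commutators with `T`
turn any nontrivial element of `W` into some `1 + ε [[0, d], [0, 0]]` with `d` a unit (this is
where `2` must be invertible, i.e. `l` odd); its powers give every `1 + ε [[0, s], [0, 0]]`, and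
`S`- and `T`-conjugates of these generate all of `V_{l,e}`.
-/

open Matrix

/-- `V_{l,e}`: the kernel of the reduction homomorphism
`SL₂(ℤ/l^eℤ) → SL₂(ℤ/l^{e-1}ℤ)` induced by the ring homomorphism `ℤ/l^eℤ → ℤ/l^{e-1}ℤ`. -/
def Vle (l e : ℕ) : Subgroup (SpecialLinearGroup (Fin 2) (ZMod (l ^ e))) :=
  MonoidHom.ker
    (SpecialLinearGroup.map
      (ZMod.castHom (pow_dvd_pow l (Nat.sub_le e 1)) (ZMod (l ^ (e - 1)))))

open scoped MatrixGroups

namespace Matrix.SpecialLinearGroup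

section CommRing

variable {R : Type*} [CommRing R] {ε : R}

/-- `1 + ε • [[a, b], [c, -a]]`: the exponential of `ε` times a traceless matrix when `ε² = 0`. -/
def sl2Exp (hε : ε * ε = 0) (a b c : R) : SL(2, R) :=
  ⟨!![1 + ε * a, ε * b; ε * c, 1 - ε * a], by
    rw [det_fin_two_of]; linear_combination (-(a * a) - b * c) * hε⟩

variable (hε : ε * ε = 0)

theorem coe_sl2Exp (a b c : R) :
    (sl2Exp hε a b c : Matrix (Fin 2) (Fin 2) R) = !![1 + ε * a, ε * b; ε * c, 1 - ε * a] := rfl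

theorem sl2Exp_mul (a b c a' b' c' : R) :
    sl2Exp hε a b c * sl2Exp hε a' b' c' = sl2Exp hε (a + a') (b + b') (c + c') := by
  ext i j
  simp only [coe_mul, coe_sl2Exp, mul_fin_two]
  fin_cases i <;> fin_cases j <;> simp <;> grind

theorem sl2Exp_congr {a b c a' b' c' : R} (ha : ε * a = ε * a') (hb : ε * b = ε * b')
    (hc : ε * c = ε * c') : sl2Exp hε a b c = sl2Exp hε a' b' c' := by
  ext i j
  fin_cases i <;> fin_cases j <;> simp [coe_sl2Exp, ha, hb, hc]

theorem sl2Exp_zero : sl2Exp hε 0 0 0 = 1 := by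
  ext i j
  fin_cases i <;> fin_cases j <;> simp [coe_sl2Exp]

theorem sl2Exp_inv (a b c : R) : (sl2Exp hε a b c)⁻¹ = sl2Exp hε (-a) (-b) (-c) :=
  inv_eq_of_mul_eq_one_right <| by
    rw [sl2Exp_mul, add_neg_cancel, add_neg_cancel, add_neg_cancel, sl2Exp_zero]

theorem sl2Exp_pow (a b c : R) (n : ℕ) :
    sl2Exp hε a b c ^ n = sl2Exp hε (n • a) (n • b) (n • c) := by
  induction n with
  | zero => simp [sl2Exp_zero]
  | succ n ih => rw [pow_succ, ih, sl2Exp_mul, succ_nsmul, succ_nsmul, succ_nsmul]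

theorem T_mul_sl2Exp_mul_T_inv (a b c : R) :
    (ModularGroup.T : SL(2, R)) * sl2Exp hε a b c * (ModularGroup.T : SL(2, R))⁻¹ =
      sl2Exp hε (a + c) (b - 2 * a - c) c := by
  rw [mul_inv_eq_iff_eq_mul]
  ext i j
  simp only [coe_mul, coe_sl2Exp, coe_matrix_coe, ModularGroup.coe_T]
  fin_cases i <;> fin_cases j <;> simp [mul_apply, Fin.sum_univ_two] <;> ring

theorem S_mul_sl2Exp_mul_S_inv (a b c : R) :
    (ModularGroup.S : SL(2, R)) * sl2Exp hε a b c * (ModularGroup.S : SL(2, R))⁻¹ =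
      sl2Exp hε (-a) (-c) (-b) := by
  rw [mul_inv_eq_iff_eq_mul]
  ext i j
  simp only [coe_mul, coe_sl2Exp, coe_matrix_coe, ModularGroup.coe_S]
  fin_cases i <;> fin_cases j <;> simp [mul_apply, Fin.sum_univ_two, sub_eq_add_neg, add_comm]

theorem mem_ker_map_iff {S : Type*} [CommRing S] (f : R →+* S) (hf : ∀ y, f y = 0 ↔ ε ∣ y)
    (x : SL(2, R)) : x ∈ (map f).ker ↔ ∃ a b c, x = sl2Exp hε a b c := by
  constructor
  · intro hx
    have hent (i j : Fin 2) : f (x i j) = (1 : Matrix (Fin 2) (Fin 2) S) i j := by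
      simpa using congr_arg (fun g : SL(2, S) ↦ g i j) ((MonoidHom.mem_ker).1 hx)
    obtain ⟨a, ha⟩ := (hf (x 0 0 - 1)).1 (by simp [hent])
    obtain ⟨b, hb⟩ := (hf (x 0 1)).1 (by simp [hent])
    obtain ⟨c, hc⟩ := (hf (x 1 0)).1 (by simp [hent])
    obtain ⟨d, hd⟩ := (hf (x 1 1 - 1)).1 (by simp [hent])
    have hdet : x 0 0 * x 1 1 - x 0 1 * x 1 0 = 1 := by rw [← det_fin_two]; exact x.2
    rw [eq_add_of_sub_eq ha, eq_add_of_sub_eq hd, hb, hc] at hdet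
    have htrace : ε * a + ε * d = 0 := by linear_combination hdet + (b * c - a * d) * hε
    refine ⟨a, b, c, ?_⟩
    ext i j
    fin_cases i <;> fin_cases j <;> simp only [coe_sl2Exp] <;> simp
    · linear_combination ha
    · exact hb
    · exact hc
    · linear_combination hd + htrace
  · rintro ⟨a, b, c, rfl⟩
    have hε0 : f ε = 0 := (hf ε).2 dvd_rfl
    rw [MonoidHom.mem_ker]
    ext i j
    fin_cases i <;> fin_cases j <;> simp [coe_sl2Exp, hε0]

variable {W : Subgroup SL(2, R)}

theorem sl2Exp_commutator_mem (hW : W.Normal) {a b c : R} (hx : sl2Exp hε a b c ∈ W) :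
    sl2Exp hε c (-2 * a - c) 0 ∈ W := by
  have hconj := hW.conj_mem _ hx ModularGroup.T
  rw [T_mul_sl2Exp_mul_T_inv] at hconj
  have := W.mul_mem hconj (W.inv_mem hx)
  rw [sl2Exp_inv, sl2Exp_mul] at this
  convert this using 2 <;> ring

theorem exists_sl2Exp_upper_mem (h2 : IsUnit (2 : R)) (hW : W.Normal) {a b c : R}
    (hx : sl2Exp hε a b c ∈ W) (hne : sl2Exp hε a b c ≠ 1) :
    ∃ d, ε * d ≠ 0 ∧ sl2Exp hε 0 d 0 ∈ W := by
  have two_mul_ne {y : R} (hy : ε * y ≠ 0) : ε * (-2 * y) ≠ 0 := by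
    rwa [mul_left_comm, Ne, h2.neg.mul_right_eq_zero]
  by_cases hc : ε * c = 0
  · by_cases ha : ε * a = 0
    · refine ⟨b, fun hb ↦ hne ?_, ?_⟩
      · rw [← sl2Exp_zero hε]
        exact sl2Exp_congr hε (by simp [ha]) (by simp [hb]) (by simp [hc])
      · rwa [sl2Exp_congr hε (a' := 0) (c' := 0) (by simp [ha]) rfl (by simp [hc])] at hx
    · refine ⟨-2 * a - c, ?_, ?_⟩
      · simpa [mul_sub, hc] using two_mul_ne ha
      · have := sl2Exp_commutator_mem hε hW hx
        rwa [sl2Exp_congr hε (a' := 0) (by simp [hc]) rfl rfl] at this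
  · refine ⟨-2 * c - 0, by simpa using two_mul_ne hc, ?_⟩
    exact sl2Exp_commutator_mem hε hW (sl2Exp_commutator_mem hε hW hx)

theorem sl2Exp_mem_of_forall_upper_mem (hW : W.Normal) (hupper : ∀ s, sl2Exp hε 0 s 0 ∈ W)
    (a b c : R) : sl2Exp hε a b c ∈ W := by
  have hlower (s : R) : sl2Exp hε 0 0 s ∈ W := by
    have := hW.conj_mem _ (hupper (-s)) ModularGroup.S
    rwa [S_mul_sl2Exp_mul_S_inv, neg_zero, neg_neg] at this
  have hdiag : sl2Exp hε a (-a) a ∈ W := by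
    have := hW.conj_mem _ (hlower a) ModularGroup.T
    rw [T_mul_sl2Exp_mul_T_inv] at this
    convert this using 2 <;> ring
  have := W.mul_mem (W.mul_mem hdiag (hupper (a + b))) (hlower (c - a))
  rw [sl2Exp_mul, sl2Exp_mul] at this
  convert this using 2 <;> ring

end CommRing

theorem sl2Exp_upper_mem_of_isUnit {n : ℕ} [NeZero n] {ε : ZMod n} (hε : ε * ε = 0)
    {W : Subgroup SL(2, ZMod n)} {d : ZMod n} (hd : IsUnit d) (h : sl2Exp hε 0 d 0 ∈ W)
    (s : ZMod n) : sl2Exp hε 0 s 0 ∈ W := by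
  obtain ⟨u, rfl⟩ := hd
  have := W.pow_mem h (s * ↑u⁻¹).val
  rwa [sl2Exp_pow, smul_zero, nsmul_eq_mul, ZMod.natCast_zmod_val, mul_assoc, Units.inv_mul,
    mul_one] at this

end Matrix.SpecialLinearGroup

namespace ZMod

theorem natCast_pow_pred_mul_self {l e : ℕ} (he : 2 ≤ e) :
    ((l ^ (e - 1) : ℕ) : ZMod (l ^ e)) * (l ^ (e - 1) : ℕ) = 0 := by
  rw [← Nat.cast_mul, natCast_eq_zero_iff, ← pow_add]
  exact pow_dvd_pow l (by omega)

theorem castHom_eq_zero_iff {m n : ℕ} [NeZero n] (h : m ∣ n) (y : ZMod n) :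
    castHom h (ZMod m) y = 0 ↔ (m : ZMod n) ∣ y := by
  constructor
  · intro hy
    rw [castHom_apply, ← natCast_val, natCast_eq_zero_iff] at hy
    obtain ⟨k, hk⟩ := hy
    exact ⟨k, by rw [← natCast_zmod_val y, hk, Nat.cast_mul]⟩
  · rintro ⟨k, rfl⟩
    rw [map_mul, map_natCast, natCast_self, zero_mul]

theorem isUnit_of_natCast_pow_pred_mul_ne_zero {l e : ℕ} (hl : l.Prime) {x : ZMod (l ^ e)}
    (hx : ((l ^ (e - 1) : ℕ) : ZMod (l ^ e)) * x ≠ 0) : IsUnit x := by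
  have : NeZero (l ^ e) := ⟨pow_ne_zero e hl.ne_zero⟩
  rcases Nat.eq_zero_or_pos e with rfl | he
  · exact absurd (Subsingleton.elim (α := ZMod 1) _ _) hx
  rw [← natCast_zmod_val x, isUnit_natCast_iff_not_dvd_pow hl he]
  rintro ⟨k, hk⟩
  apply hx
  rw [← natCast_zmod_val x, hk, ← Nat.cast_mul, ← mul_assoc, ← pow_succ, Nat.sub_add_cancel he,
    Nat.cast_mul, natCast_self, zero_mul]

end ZMod

open Matrix.SpecialLinearGroup in
/-- Let `l` be an odd prime and let `e ≥ 2` be an integer.  Let `V_{l,e}` denote the kernel of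
the reduction homomorphism `SL₂(ℤ/l^eℤ) → SL₂(ℤ/l^{e−1}ℤ)` induced by the ring homomorphism
`ℤ/l^eℤ → ℤ/l^{e−1}ℤ`.  Then `V_{l,e}` is abelian, and the only subgroups of `SL₂(ℤ/l^eℤ)`
that are contained in `V_{l,e}` and are normal in `SL₂(ℤ/l^eℤ)` are the trivial subgroup and
`V_{l,e}` itself. -/
theorem Vle_abelian_and_minimal_normal
    (l : ℕ) (hl : l.Prime) (hodd : Odd l) (e : ℕ) (he : 2 ≤ e) :
    (∀ x ∈ Vle l e, ∀ y ∈ Vle l e, x * y = y * x) ∧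
    (∀ W : Subgroup (SpecialLinearGroup (Fin 2) (ZMod (l ^ e))),
      W ≤ Vle l e → W.Normal → W = ⊥ ∨ W = Vle l e) := by
  have : NeZero (l ^ e) := ⟨pow_ne_zero e hl.ne_zero⟩
  have hε := ZMod.natCast_pow_pred_mul_self (l := l) he
  have hV (x) : x ∈ Vle l e ↔ ∃ a b c, x = sl2Exp hε a b c :=
    mem_ker_map_iff hε _ (ZMod.castHom_eq_zero_iff _) x
  have h2 : IsUnit (2 : ZMod (l ^ e)) := by
    exact_mod_cast (ZMod.isUnit_iff_coprime 2 (l ^ e)).2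
      ((Nat.coprime_two_left.2 hodd).pow_right e)
  refine ⟨fun x hx y hy ↦ ?_, fun W hWV hW ↦ ?_⟩
  · obtain ⟨a, b, c, rfl⟩ := (hV x).1 hx
    obtain ⟨a', b', c', rfl⟩ := (hV y).1 hy
    rw [sl2Exp_mul, sl2Exp_mul, add_comm a, add_comm b, add_comm c]
  · refine W.bot_or_exists_ne_one.imp id fun ⟨x, hxW, hx1⟩ ↦ le_antisymm hWV fun y hy ↦ ?_
    obtain ⟨a, b, c, rfl⟩ := (hV x).1 (hWV hxW)
    obtain ⟨d, hd, hdW⟩ := exists_sl2Exp_upper_mem hε h2 hW hxW hx1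
    obtain ⟨a', b', c', rfl⟩ := (hV y).1 hy
    have hd_unit := ZMod.isUnit_of_natCast_pow_pred_mul_ne_zero hl hd
    exact sl2Exp_mem_of_forall_upper_mem hε hW (sl2Exp_upper_mem_of_isUnit hε hd_unit hdW) a' b' c'
end

section
/- Let l ≥ 5 be a prime and let e ≥ 2 be an integer. Then every element g of SL₂(ℤ/l^eℤ) satisfying g^l = 1 lies in the kernel of the reduction homomorphism SL₂(ℤ/l^eℤ) → SL₂(ℤ/l^{e−1}ℤ) induced by the ring homomorphism ℤ/l^eℤ → ℤ/l^{e−1}ℤ; that is, the l-torsion of SL₂(ℤ/l^eℤ) is contained in the subgroup of matrices congruent to the identity modulo l^{e−1}. -/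
/-!
Lift `g` to an integer matrix `1 + M`, so that `(1 + M) ^ l ≡ 1` modulo `l ^ e`. Modulo `l`,
Frobenius gives `M ^ l ≡ 0`, and by Cayley–Hamilton a nilpotent `2 × 2` matrix over `𝔽_l` squares
to zero. Inductively, once `M * M ≡ 0` modulo `l ^ (e - 1)`, every term of the binomial expansion
of `(1 + M) ^ l - 1` other than `l • M` vanishes modulo `l ^ e`: the inner binomial coefficients
are divisible by `l`, and `M ^ l = M ^ (l - 4) * M² * M²` is divisible by `l ^ (2 (e - 1))`,
which needs `l > 3`. Hence `l ^ e ∣ l • M`, i.e. `M ≡ 0` modulo `l ^ (e - 1)`.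
-/

open Matrix

namespace Matrix

theorem map_intCast_eq_zero_iff {m n : Type*} {N : ℕ} {M : Matrix m n ℤ} :
    M.map (Int.cast : ℤ → ZMod N) = 0 ↔ ∀ i j, (N : ℤ) ∣ M i j := by
  simp only [← ZMod.intCast_zmod_eq_zero_iff_dvd, ← Matrix.ext_iff, map_apply, zero_apply]

variable {n : Type*} [Fintype n]

theorem mul_dvd_mul_apply {R : Type*} [CommRing R] {a b : R} {M N : Matrix n n R}
    (hM : ∀ i j, a ∣ M i j) (hN : ∀ i j, b ∣ N i j) (i j : n) : a * b ∣ (M * N) i j :=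
  Finset.dvd_sum fun k _ => mul_dvd_mul (hM i k) (hN k j)

variable [DecidableEq n]

theorem pow_card_eq_zero_of_isNilpotent {R : Type*} [CommRing R] [IsReduced R]
    {M : Matrix n n R} (hM : IsNilpotent M) : M ^ Fintype.card n = 0 := by
  have hchar : M.charpoly = Polynomial.X ^ Fintype.card n := by
    refine sub_eq_zero.mp (Polynomial.ext fun i => ?_)
    exact (Polynomial.isNilpotent_iff.mp
      (isNilpotent_charpoly_sub_pow_of_isNilpotent hM) i).eq_zero
  simpa [hchar] using M.aeval_self_charpoly

theorem dvd_mul_self_apply_of_dvd_one_add_pow_sub_one {p : ℕ} [Fact p.Prime]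
    {M : Matrix (Fin 2) (Fin 2) ℤ} (H : ∀ i j, (p : ℤ) ∣ ((1 + M) ^ p - 1) i j) :
    ∀ i j, (p : ℤ) ∣ (M * M) i j := by
  let ρ := (Int.castRingHom (ZMod p)).mapMatrix (m := Fin 2)
  rw [← map_intCast_eq_zero_iff] at H ⊢
  change ρ _ = 0 at H
  change ρ _ = 0
  rw [map_sub, map_pow, map_add, map_one, sub_eq_zero,
    add_pow_char_of_commute _ (Commute.one_left _), one_pow, add_eq_left] at H
  rw [map_mul, ← sq]
  simpa using pow_card_eq_zero_of_isNilpotent ⟨p, H⟩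

theorem pow_add_two_dvd_one_add_pow_sub_one_sub_nsmul_apply {p k : ℕ} (hp : p.Prime)
    (hp3 : 3 < p) {M : Matrix n n ℤ} (hM : ∀ i j, (p : ℤ) ^ (k + 1) ∣ (M * M) i j) (i j : n) :
    (p : ℤ) ^ (k + 2) ∣ ((1 + M) ^ p - 1 - p • M) i j := by
  have hsum : (1 + M) ^ p - 1 - p • M =
      ∑ m ∈ Finset.range (p - 1), p.choose (m + 2) • M ^ (m + 2) := by
    obtain ⟨q, rfl⟩ : ∃ q, p = q + 2 := ⟨p - 2, by omega⟩
    rw [add_comm, (Commute.one_right M).add_pow]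
    simp only [one_pow, mul_one, ← nsmul_eq_mul']
    rw [Finset.sum_range_succ', Finset.sum_range_succ']
    simp
  have hMm (m : ℕ) : ∀ i j, (p : ℤ) ^ (k + 1) ∣ (M ^ m * (M * M)) i j := by
    simpa using mul_dvd_mul_apply (fun _ _ => one_dvd _) hM
  rw [hsum, Matrix.sum_apply]
  refine Finset.dvd_sum fun m hm => ?_
  rw [Finset.mem_range] at hm
  rw [smul_apply, nsmul_eq_mul]
  rcases eq_or_ne (m + 2) p with hmp | hmp
  · have hMp : M ^ p = M ^ (p - 4) * (M * M) * (M * M) := by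
      rw [← sq, mul_assoc, ← pow_add, ← pow_add]
      congr 1
      omega
    rw [hmp, Nat.choose_self, Nat.cast_one, one_mul, hMp]
    refine dvd_trans (pow_dvd_pow _ (by omega : k + 2 ≤ k + 1 + (k + 1))) ?_
    rw [pow_add]
    exact mul_dvd_mul_apply (hMm _) hM i j
  · have hchoose : (p : ℤ) ∣ p.choose (m + 2) :=
      Int.natCast_dvd_natCast.mpr (hp.dvd_choose_self (by omega) (by omega))
    rw [pow_succ', pow_add M m 2, sq M]
    exact mul_dvd_mul hchoose (hMm m i j)

theorem pow_dvd_apply_of_pow_succ_dvd_one_add_pow_sub_one {p : ℕ} (hp : p.Prime) (hp3 : 3 < p)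
    {e : ℕ} {M : Matrix (Fin 2) (Fin 2) ℤ}
    (H : ∀ i j, (p : ℤ) ^ (e + 1) ∣ ((1 + M) ^ p - 1) i j) :
    ∀ i j, (p : ℤ) ^ e ∣ M i j := by
  induction e with
  | zero => simp
  | succ e ih =>
    have hMM : ∀ i j, (p : ℤ) ^ (e + 1) ∣ (M * M) i j := by
      rcases e with _ | e
      · have : Fact p.Prime := ⟨hp⟩
        simpa using dvd_mul_self_apply_of_dvd_one_add_pow_sub_one
          fun i j => (dvd_pow_self _ (by simp)).trans (H i j)
      · have hM := ih fun i j => (pow_dvd_pow _ (by omega)).trans (H i j)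
        intro i j
        have hMM := mul_dvd_mul_apply hM hM i j
        rw [← pow_add] at hMM
        exact (pow_dvd_pow _ (by omega)).trans hMM
    intro i j
    have hpM :=
      dvd_sub (H i j) (pow_add_two_dvd_one_add_pow_sub_one_sub_nsmul_apply hp hp3 hMM i j)
    rw [← sub_apply, sub_sub_cancel, smul_apply, nsmul_eq_mul] at hpM
    rwa [pow_succ', mul_dvd_mul_iff_left (by exact_mod_cast hp.ne_zero)] at hpM

end Matrix

/-- Let `l ≥ 5` be a prime and let `e ≥ 2` be an integer.  Then every element `g` of
`SL₂(ℤ/l^eℤ)` satisfying `g^l = 1` lies in the kernel of the reduction homomorphism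
`SL₂(ℤ/l^eℤ) → SL₂(ℤ/l^{e−1}ℤ)` induced by the ring homomorphism `ℤ/l^eℤ → ℤ/l^{e−1}ℤ`;
that is, the `l`-torsion of `SL₂(ℤ/l^eℤ)` is contained in the subgroup of matrices congruent
to the identity modulo `l^{e−1}`. -/
theorem l_torsion_in_kernel_of_reduction
    (l : ℕ) (hl : l.Prime) (hl5 : 5 ≤ l) (e : ℕ) (he : 2 ≤ e)
    (g : SpecialLinearGroup (Fin 2) (ZMod (l ^ e))) (hg : g ^ l = 1) :
    g ∈ MonoidHom.ker
      (SpecialLinearGroup.map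
        (ZMod.castHom (pow_dvd_pow l (Nat.sub_le e 1)) (ZMod (l ^ (e - 1))))) := by
  let ρ (N : ℕ) := (Int.castRingHom (ZMod N)).mapMatrix (m := Fin 2)
  let G : Matrix (Fin 2) (Fin 2) ℤ := (g : Matrix (Fin 2) (Fin 2) (ZMod (l ^ e))).map ZMod.cast
  have hG : ρ (l ^ e) G = g := by ext; simp [ρ, G]
  have hGl : ∀ i j, (l : ℤ) ^ (e - 1 + 1) ∣ ((1 + (G - 1)) ^ l - 1) i j := by
    rw [Nat.sub_add_cancel (by omega), add_sub_cancel, ← Int.natCast_pow,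
      ← map_intCast_eq_zero_iff]
    change ρ (l ^ e) _ = 0
    rw [map_sub, map_pow, hG, map_one, sub_eq_zero]
    exact congrArg Subtype.val hg
  have hG1 := pow_dvd_apply_of_pow_succ_dvd_one_add_pow_sub_one hl (by omega) hGl
  rw [← Int.natCast_pow, ← map_intCast_eq_zero_iff] at hG1
  change ρ (l ^ (e - 1)) _ = 0 at hG1
  rw [map_sub, map_one, sub_eq_zero] at hG1
  rw [MonoidHom.mem_ker]
  ext i j
  simpa [ρ, G] using congrFun (congrFun hG1 i) j
end

section
/- Let m ≥ 2 be an integer and let H_m be the subgroup of GL₂(ℝ) generated by the image of SL₂(ℤ) and the diagonal matrix diag(m, 1). Then the intersection H_m ∩ SL₂(ℝ) is dense in SL₂(ℝ); that is, the set of elements of SL₂(ℝ) that belong to H_m is dense in SL₂(ℝ) for its topology as a subset of the 2×2 real matrices. -/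
/-!
Conjugating by `diag(m, 1)` multiplies the entry of an upper transvection by `m` and that of a
lower one by `1 / m`. Hence, for each of the two transvection directions, the coefficients `c`
whose transvection lies in `H_m` form an additive subgroup of `ℝ` that contains `1` and is stable
under division by `m`; such a subgroup is dense. So the closure of `H_m ∩ SL₂(ℝ)` contains every
transvection, and transvections generate `SL₂(ℝ)`.
-/

open Matrix

/-- The diagonal matrix `diag(m, 1)` as an element of `GL₂(ℝ)`. -/
noncomputable def diagm (m : ℕ) (hm : 2 ≤ m) : GL (Fin 2) ℝ :=
  Matrix.GeneralLinearGroup.mkOfDetNeZero (Matrix.diagonal ![(m : ℝ), 1])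
    (by
      have hm0 : (m : ℝ) ≠ 0 := by positivity
      simp [Matrix.det_diagonal, Fin.prod_univ_two, hm0])

/-- `H_m`: the subgroup of `GL₂(ℝ)` generated by the image of `SL₂(ℤ)` and the diagonal
matrix `diag(m, 1)`. -/
noncomputable def Hm (m : ℕ) (hm : 2 ≤ m) : Subgroup (GL (Fin 2) ℝ) :=
  Subgroup.closure
    (Set.range
        (fun A : SpecialLinearGroup (Fin 2) ℤ =>
          SpecialLinearGroup.toGL (SpecialLinearGroup.map (Int.castRingHom ℝ) A)) ∪
      {diagm m hm})

namespace Matrix.SpecialLinearGroup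

variable {ι R : Type*} [Fintype ι] [DecidableEq ι] [CommRing R] {i j : ι}

def transvectionCoeffs (K : Subgroup (SpecialLinearGroup ι R)) (hij : i ≠ j) : AddSubgroup R where
  carrier := {c | transvection hij c ∈ K}
  add_mem' ha hb := by simpa only [Set.mem_ofPred_eq, transvection_add] using mul_mem ha hb
  zero_mem' := by simpa only [Set.mem_ofPred_eq, transvection_coeff_zero] using one_mem K
  neg_mem' ha := by simpa only [Set.mem_ofPred_eq, ← transvection_inv] using inv_mem ha

@[simp]
lemma mem_transvectionCoeffs {K : Subgroup (SpecialLinearGroup ι R)} {hij : i ≠ j} {c : R} :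
    c ∈ transvectionCoeffs K hij ↔ transvection hij c ∈ K :=
  Iff.rfl

lemma map_transvection {S : Type*} [CommRing S] (f : R →+* S) (hij : i ≠ j) (c : R) :
    map f (transvection hij c) = transvection hij (f c) :=
  Subtype.ext <| by simp [transvection_coe, Matrix.map_add, map_single]

lemma diagonal_mul_transvection (D : ι → R) (hij : i ≠ j) (c : R) :
    diagonal D * (transvection hij (D j * c) : Matrix ι ι R) =
      (transvection hij (D i * c) : Matrix ι ι R) * diagonal D := by
  ext k l
  simp only [diagonal_mul, mul_diagonal, transvection_coe, Matrix.add_apply, one_apply,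
    single_apply]
  split_ifs <;> simp_all [mul_comm, mul_left_comm]

variable [TopologicalSpace R] [IsTopologicalRing R]

lemma continuous_transvection (hij : i ≠ j) :
    Continuous (transvection hij : R → SpecialLinearGroup ι R) := by
  refine continuous_induced_rng.2 <| continuous_const.add (continuous_matrix fun k l => ?_)
  simp only [single_apply]
  exact continuous_if_const _ (fun _ => continuous_id) (fun _ => continuous_const)

end Matrix.SpecialLinearGroup

theorem AddSubgroup.dense_of_div_mem {𝕜 : Type*} [Field 𝕜] [LinearOrder 𝕜] [IsStrictOrderedRing 𝕜]
    [TopologicalSpace 𝕜] [OrderTopology 𝕜] [Archimedean 𝕜] (S : AddSubgroup 𝕜) {a q : 𝕜}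
    (ha : 0 < a) (haS : a ∈ S) (hq : 1 < q) (hS : ∀ x ∈ S, x / q ∈ S) : Dense (S : Set 𝕜) := by
  have hpow (n : ℕ) : a / q ^ n ∈ S := by
    induction n with
    | zero => simpa using haS
    | succ n ih => simpa only [pow_succ, div_div] using hS _ ih
  refine S.dense_of_not_isolated_zero fun ε hε => ?_
  obtain ⟨n, hn⟩ := exists_pow_lt_of_lt_one (div_pos hε ha) (inv_lt_one_of_one_lt₀ hq)
  refine ⟨a / q ^ n, hpow n, by positivity, ?_⟩
  calc a / q ^ n = a * q⁻¹ ^ n := by rw [inv_pow, div_eq_mul_inv]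
    _ < a * (ε / a) := by gcongr
    _ = ε := mul_div_cancel₀ ε ha.ne'

open Matrix.SpecialLinearGroup

theorem Matrix.SL2.dense_of_dense_transvectionCoeffs {F : Type*} [Field F] [TopologicalSpace F]
    [IsTopologicalRing F] (K : Subgroup (SpecialLinearGroup (Fin 2) F))
    (hK : ∀ (i j : Fin 2) (hij : i ≠ j), Dense (transvectionCoeffs K hij : Set F)) :
    Dense (K : Set (SpecialLinearGroup (Fin 2) F)) :=
  SL2.transvection_induction (· ∈ K.topologicalClosure)
    (fun i j hij c => map_mem_closure (continuous_transvection hij) (hK i j hij c) fun _ h => h)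
    (fun _ _ => mul_mem)

noncomputable def HmSL (m : ℕ) (hm : 2 ≤ m) : Subgroup (SpecialLinearGroup (Fin 2) ℝ) :=
  (Hm m hm).comap toGL

section HmSL

variable (m : ℕ) (hm : 2 ≤ m) {i j : Fin 2}

lemma diagm_mem_Hm : diagm m hm ∈ Hm m hm :=
  Subgroup.subset_closure (Or.inr rfl)

lemma one_mem_transvectionCoeffs_HmSL (hij : i ≠ j) :
    (1 : ℝ) ∈ transvectionCoeffs (HmSL m hm) hij := by
  have h := map_transvection (Int.castRingHom ℝ) hij 1
  rw [map_one] at h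
  show toGL (transvection hij 1) ∈ Hm m hm
  rw [← h]
  exact Subgroup.subset_closure (Or.inl ⟨_, rfl⟩)

lemma transvection_mem_HmSL_iff (hij : i ≠ j) (c : ℝ) :
    transvection hij (![(m : ℝ), 1] i * c) ∈ HmSL m hm ↔
      transvection hij (![(m : ℝ), 1] j * c) ∈ HmSL m hm := by
  have hconj : toGL (transvection hij (![(m : ℝ), 1] i * c)) =
      diagm m hm * toGL (transvection hij (![(m : ℝ), 1] j * c)) * (diagm m hm)⁻¹ :=
    eq_mul_inv_of_mul_eq <| Units.ext (diagonal_mul_transvection _ hij c).symm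
  show toGL _ ∈ Hm m hm ↔ toGL _ ∈ Hm m hm
  rw [hconj, Subgroup.mul_mem_cancel_right _ (inv_mem (diagm_mem_Hm m hm)),
    Subgroup.mul_mem_cancel_left _ (diagm_mem_Hm m hm)]

lemma div_mem_transvectionCoeffs_HmSL (hij : i ≠ j) {c : ℝ}
    (hc : c ∈ transvectionCoeffs (HmSL m hm) hij) :
    c / m ∈ transvectionCoeffs (HmSL m hm) hij := by
  have hm0 : (m : ℝ) ≠ 0 := by positivity
  have h := transvection_mem_HmSL_iff m hm hij (c / m)
  fin_cases i <;> fin_cases j <;> first | exact absurd rfl hij | simp_all [mul_div_cancel₀]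

end HmSL

/-- Let `m ≥ 2` be an integer and let `H_m` be the subgroup of `GL₂(ℝ)` generated by the image
of `SL₂(ℤ)` and the diagonal matrix `diag(m, 1)`.  Then the intersection `H_m ∩ SL₂(ℝ)` is
dense in `SL₂(ℝ)`; that is, the set of elements of `SL₂(ℝ)` that belong to `H_m` is dense in
`SL₂(ℝ)` for its topology as a subset of the `2×2` real matrices. -/
theorem Hm_inter_SL2_dense (m : ℕ) (hm : 2 ≤ m) :
    Dense {A : {B : Matrix (Fin 2) (Fin 2) ℝ // B.det = 1} |
      ∃ g ∈ Hm m hm,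
        ((g : GL (Fin 2) ℝ) : Matrix (Fin 2) (Fin 2) ℝ) = (A : Matrix (Fin 2) (Fin 2) ℝ)} := by
  have hset : {A : SpecialLinearGroup (Fin 2) ℝ | ∃ g ∈ Hm m hm,
      ((g : GL (Fin 2) ℝ) : Matrix (Fin 2) (Fin 2) ℝ) = A} = HmSL m hm := by
    ext A
    exact ⟨fun ⟨g, hg, hgA⟩ => show toGL A ∈ Hm m hm from Units.ext (v := toGL A) hgA ▸ hg,
      fun hA => ⟨_, hA, rfl⟩⟩
  have hm1 : (1 : ℝ) < m := by exact_mod_cast hm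
  have hdense : Dense (HmSL m hm : Set (SpecialLinearGroup (Fin 2) ℝ)) :=
    SL2.dense_of_dense_transvectionCoeffs _ fun _ _ hij =>
      (transvectionCoeffs _ hij).dense_of_div_mem one_pos (one_mem_transvectionCoeffs_HmSL m hm hij)
        hm1 fun _ => div_mem_transvectionCoeffs_HmSL m hm hij
  rwa [← hset] at hdense
end
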